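/- Let N ≥ 1 be a natural number, Z ∈ ℂ, and Q ∈ ℂ with 0 < ‖Q‖ < 1. For l ∈ ℤ define τ_l := ∏_{n=1}^{∞} (1 − Z·Q^{l+nN})ⁿ (the product is multipliable since ‖Q^N‖ < 1). Then for all l ∈ ℤ: τ_{l+N}·τ_{l−N} = (1 − Z·Q^l)·τ_l². Consequently, the constant-in-j family τ_{j,l} := τ_l (j ∈ ℤ/Nℤ) solves the Y^{N,0} bilinear system τ_{j,l+N}·τ_{j,l−N} = τ_{j,l}² − Z·Q^l·τ_{j+1,l}·τ_{j−1,l}. -/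

import Mathlib

/-!
With the double `q`-Pochhammer symbol `(c; r, r)_∞ = ∏_{n ≥ 0} (1 - c rⁿ)^{n+1}` one has
`τ_l = (Z Q^{l+N}; Q^N, Q^N)_∞`, so the recursion reads
`(c r²; r, r)_∞ (c; r, r)_∞ = (1 - c) (c r; r, r)_∞²` with `c = Z Q^l`, `r = Q^N`.
Writing `a_n = 1 - c rⁿ`, the first product is `∏_{n ≥ 1} a_n^{n-1}`, the second is
`a₀ ∏_{n ≥ 1} a_n^{n+1}` and the square is `∏_{n ≥ 1} a_n^{2n}`, so the exponents match.
Convergence comes from `‖(1 + w)^k - 1‖ ≤ exp (k ‖w‖) - 1` and `∑ n ‖r‖ⁿ < ∞`.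
Since `τ` does not depend on `j`, the bilinear system reduces to the recursion.
-/

/-- The j-independent twisted-field tau-function
`τ_l = ∏_{n=1}^∞ (1 − Z·Q^{l+nN})ⁿ` of the `Y^{N,0}` system. -/
noncomputable def twistTauYN0 (N : ℕ) (Z Q : ℂ) (l : ℤ) : ℂ :=
  ∏' n : ℕ, (1 - Z * Q ^ (l + (n + 1) * (N : ℤ))) ^ (n + 1)

/-- The double `q`-Pochhammer symbol `(c; r, r)_∞ = ∏_{i,j ≥ 0} (1 - c r^{i+j})`, with the
factors grouped by `n = i + j`. -/
noncomputable def doubleQPochhammer {R : Type*} [CommRing R] [TopologicalSpace R] (c r : R) : R :=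
  ∏' n : ℕ, (1 - c * r ^ n) ^ (n + 1)

section

variable {ι R : Type*} [NormedCommRing R] [NormOneClass R] [CompleteSpace R]

lemma multipliable_one_add_pow_of_summable {w : ι → R} {k : ι → ℕ}
    (h : Summable fun i ↦ k i * ‖w i‖) : Multipliable fun i ↦ (1 + w i) ^ k i := by
  have hbound : ∀ᶠ i in Filter.cofinite, ‖‖(1 + w i) ^ k i - 1‖‖ ≤ 2 * (k i * ‖w i‖) := by
    filter_upwards [h.tendsto_cofinite_zero.eventually (Iic_mem_nhds zero_lt_one)] with i hi
    have hk : ‖(1 + w i) ^ k i - 1‖ ≤ Real.exp (k i * ‖w i‖) - 1 := by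
      simpa using (Finset.range (k i)).norm_prod_one_add_sub_one_le fun _ ↦ w i
    have h0 : 0 ≤ (k i : ℝ) * ‖w i‖ := by positivity
    calc ‖‖(1 + w i) ^ k i - 1‖‖ ≤ Real.exp (k i * ‖w i‖) - 1 := (norm_norm _).trans_le hk
      _ ≤ |Real.exp (k i * ‖w i‖) - 1| := le_abs_self _
      _ ≤ 2 * |(k i : ℝ) * ‖w i‖| := Real.abs_exp_sub_one_le (by rwa [abs_of_nonneg h0])
      _ = 2 * (k i * ‖w i‖) := by rw [abs_of_nonneg h0]
  simpa using multipliable_one_add_of_summable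
    (Summable.of_norm_bounded_eventually (h.mul_left 2) hbound)

lemma multipliable_one_sub_mul_pow_pow (c : R) {r : R} (hr : ‖r‖ < 1) (s : ℕ) :
    Multipliable fun n : ℕ ↦ (1 - c * r ^ n) ^ (n + s) := by
  have hr' : ‖‖r‖‖ < 1 := by rwa [norm_norm]
  have hsum : Summable fun n : ℕ ↦ ‖c‖ * ((n : ℝ) ^ 1 * ‖r‖ ^ n + s * ‖r‖ ^ n) :=
    ((summable_pow_mul_geometric_of_norm_lt_one 1 hr').add
      ((summable_geometric_of_lt_one (norm_nonneg r) hr).mul_left (s : ℝ))).mul_left _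
  simp_rw [sub_eq_add_neg]
  refine multipliable_one_add_pow_of_summable (hsum.of_nonneg_of_le (fun n ↦ by positivity)
    fun n ↦ ?_)
  calc ((n + s : ℕ) : ℝ) * ‖-(c * r ^ n)‖ ≤ (n + s) * (‖c‖ * ‖r‖ ^ n) := by
        push_cast
        gcongr
        rw [norm_neg]
        exact (norm_mul_le _ _).trans (by gcongr; exact norm_pow_le _ _)
    _ = _ := by ring

lemma doubleQPochhammer_mul_sq (c : R) {r : R} (hr : ‖r‖ < 1) :
    doubleQPochhammer (c * r ^ 2) r * doubleQPochhammer c r =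
      (1 - c) * doubleQPochhammer (c * r) r ^ 2 := by
  set a : ℕ → R := fun n ↦ 1 - c * r ^ n
  have ha : ∀ s t : ℕ, Multipliable fun n ↦ a (n + s) ^ (n + t) := fun s t ↦
    (multipliable_one_sub_mul_pow_pow (c * r ^ s) hr t).congr fun n ↦ by
      simp only [a, pow_add]; ring
  have hlow : doubleQPochhammer (c * r ^ 2) r = ∏' n, a (n + 1) ^ n := by
    rw [tprod_eq_zero_mul' (by simpa only [add_assoc] using ha 2 1)]
    simp only [doubleQPochhammer, a, pow_zero, one_mul]
    refine tprod_congr fun n ↦ ?_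
    ring
  have hhigh : doubleQPochhammer c r = (1 - c) * ∏' n, a (n + 1) ^ (n + 2) := by
    rw [doubleQPochhammer, tprod_eq_zero_mul' (by simpa only [add_assoc] using ha 1 2)]
    simp [a]
  have hmid : doubleQPochhammer (c * r) r = ∏' n, a (n + 1) ^ (n + 1) := by
    simp only [doubleQPochhammer, a, pow_succ]
    refine tprod_congr fun n ↦ ?_
    ring
  have h0 : Multipliable fun n ↦ a (n + 1) ^ n := ha 1 0
  rw [hlow, hhigh, hmid, mul_left_comm, sq, ← h0.tprod_mul (ha 1 2),
    ← (ha 1 1).tprod_mul (ha 1 1)]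
  congr 1
  refine tprod_congr fun n ↦ ?_
  rw [← pow_add, ← pow_add]
  ring_nf

end

lemma zpow_add_succ_mul {G : Type*} [GroupWithZero G] {Q : G} (hQ : Q ≠ 0) (l : ℤ) (N n : ℕ) :
    Q ^ (l + (n + 1) * (N : ℤ)) = Q ^ (l + N) * (Q ^ N) ^ n := by
  rw [← zpow_natCast, ← zpow_natCast, ← zpow_mul, ← zpow_add₀ hQ]
  congr 1
  ring

lemma twistTauYN0_eq_doubleQPochhammer (N : ℕ) (Z : ℂ) {Q : ℂ} (hQ : Q ≠ 0) (l : ℤ) :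
    twistTauYN0 N Z Q l = doubleQPochhammer (Z * Q ^ (l + N)) (Q ^ N) :=
  tprod_congr fun n ↦ by rw [zpow_add_succ_mul hQ, mul_assoc]

/-- The products `τ_l = ∏_{n=1}^∞ (1 − Z·Q^{l+nN})ⁿ` are multipliable, satisfy
`τ_{l+N}·τ_{l−N} = (1 − Z·Q^l)·τ_l²`, and hence the constant-in-`j` family
`τ_{j,l} = τ_l` solves the `Y^{N,0}` bilinear system
`τ_{j,l+N}·τ_{j,l−N} = τ_{j,l}² − Z·Q^l·τ_{j+1,l}·τ_{j−1,l}`. -/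
theorem twistTau_solves_YN0 (N : ℕ) (hN : 1 ≤ N) (Z Q : ℂ)
    (hQ0 : 0 < ‖Q‖) (hQ1 : ‖Q‖ < 1)
    (T : ZMod N → ℤ → ℂ) (hT : ∀ (j : ZMod N) (l : ℤ), T j l = twistTauYN0 N Z Q l) :
    (∀ l : ℤ, Multipliable fun n : ℕ => (1 - Z * Q ^ (l + (n + 1) * (N : ℤ))) ^ (n + 1)) ∧
    (∀ l : ℤ, twistTauYN0 N Z Q (l + N) * twistTauYN0 N Z Q (l - N) =
      (1 - Z * Q ^ l) * (twistTauYN0 N Z Q l) ^ 2) ∧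
    (∀ (j : ZMod N) (l : ℤ), T j (l + N) * T j (l - N) =
      (T j l) ^ 2 - Z * Q ^ l * T (j + 1) l * T (j - 1) l) := by
  have hQ : Q ≠ 0 := norm_pos_iff.mp hQ0
  have hr : ‖Q ^ N‖ < 1 := by
    rw [norm_pow]
    exact pow_lt_one₀ (norm_nonneg Q) hQ1 (by omega)
  have hrec : ∀ l : ℤ, twistTauYN0 N Z Q (l + N) * twistTauYN0 N Z Q (l - N) =
      (1 - Z * Q ^ l) * (twistTauYN0 N Z Q l) ^ 2 := fun l ↦ by
    have h1 : Z * Q ^ (l + N) = Z * Q ^ l * Q ^ N := by rw [zpow_add₀ hQ, zpow_natCast, mul_assoc]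
    have h2 : Z * Q ^ (l + N + N) = Z * Q ^ l * (Q ^ N) ^ 2 := by
      rw [zpow_add₀ hQ, ← mul_assoc, h1, zpow_natCast, sq, mul_assoc]
    simp only [twistTauYN0_eq_doubleQPochhammer N Z hQ, sub_add_cancel, h1, h2]
    exact doubleQPochhammer_mul_sq (Z * Q ^ l) hr
  refine ⟨fun l ↦ ?_, hrec, fun j l ↦ ?_⟩
  · exact (multipliable_one_sub_mul_pow_pow (Z * Q ^ (l + N)) hr 1).congr fun n ↦ by
      rw [zpow_add_succ_mul hQ, mul_assoc]
  · simp only [hT]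
    linear_combination hrec l
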